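/- arXiv:1907.00363 — 3 statements merged into one kernel-verified Lean document; each statement's English description precedes it below -/
import Mathlib

section
/- For 0 < s < 1, the set A = {⌊n^{1/s}⌋ : n ∈ ℕ} has convergence exponent λ(A) = s. Consequently, for 0 < s < q ≤ 1 the inclusion I_0 ⊆ I_{<q} is strict. -/
open Filter Topology
open scoped NNReal

/-- The convergence exponent of a set `A` of positive integers:
`λ(A) = inf {t > 0 : ∑_{a ∈ A} 1/a^t < ∞}`. -/
noncomputable def convExp (A : Set ℕ) : ℝ :=
  sInf {t : ℝ | 0 < t ∧ Summable (fun a : A => ((a : ℝ) ^ t)⁻¹)}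

/-- For `0 < s < 1`, the set `A = {⌊n^{1/s}⌋ : n ≥ 1}` has `λ(A) = s`;
consequently for `s < q ≤ 1` the inclusion `I₀ ⊆ I_{<q}` is strict. -/
theorem convExp_floor_rpow (s : ℝ) (hs0 : 0 < s) (hs1 : s < 1) :
    convExp ((fun n : ℕ => ⌊(n : ℝ) ^ (1 / s)⌋₊) '' {n | 1 ≤ n}) = s ∧
    ∀ q : ℝ, s < q → q ≤ 1 →
      {B : Set ℕ | convExp B = 0} ⊂ {B : Set ℕ | convExp B < q} := by
  set c : ℝ := 1 / s with hc
  have hc1 : 1 < c := one_lt_one_div hs0 hs1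
  set a : ℕ → ℕ := fun n => ⌊(n : ℝ) ^ c⌋₊ with ha
  set A : Set ℕ := a '' {n | 1 ≤ n} with hA
  -- basic facts
  have hxnn : ∀ n : ℕ, (0:ℝ) ≤ (n : ℝ) ^ c := fun n => Real.rpow_nonneg n.cast_nonneg c
  have hfle : ∀ n : ℕ, (a n : ℝ) ≤ (n : ℝ) ^ c := fun n => Nat.floor_le (hxnn n)
  -- superadditivity step: (m+1)^c ≥ m^c + 1
  have hstep : ∀ m : ℕ, (m : ℝ) ^ c + 1 ≤ ((m : ℝ) + 1) ^ c := by
    intro m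
    have h := NNReal.add_rpow_le_rpow_add (m : ℝ≥0) 1 hc1.le
    have h' : ((m : ℝ≥0) ^ c + 1 ^ c : ℝ≥0) ≤ (((m : ℝ≥0) + 1) ^ c : ℝ≥0) := h
    have := NNReal.coe_le_coe.mpr h'
    simpa [NNReal.coe_rpow] using this
  have hmono : StrictMono a := by
    apply strictMono_nat_of_lt_succ
    intro n
    have h1 : ((a n : ℝ) + 1) ≤ ((n : ℝ) + 1) ^ c :=
      le_trans (by linarith [hfle n]) (hstep n)
    have : (a n + 1 : ℕ) ≤ a (n + 1) := by
      apply Nat.le_floor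
      push_cast
      exact h1
    omega
  have hinj : Set.InjOn a {n | 1 ≤ n} := hmono.injective.injOn
  have h1le : ∀ n : ℕ, 1 ≤ n → 1 ≤ a n := by
    intro n hn
    apply Nat.le_floor
    rw [Nat.cast_one]
    exact Real.one_le_rpow (by exact_mod_cast hn) (by positivity)
  have h2le : ∀ n : ℕ, 1 ≤ n → (n : ℝ) ^ c ≤ 2 * a n := by
    intro n hn
    rcases eq_or_lt_of_le hn with h | h
    · have : n = 1 := h.symm
      subst this
      simp only [Nat.cast_one, Real.one_rpow]
      have := h1le 1 le_rfl
      have : (1:ℝ) ≤ (a 1 : ℝ) := by exact_mod_cast this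
      linarith
    · -- n ≥ 2, so n^c ≥ 2 and floor > n^c - 1 ≥ n^c / 2
      have hn2 : (2:ℝ) ≤ (n : ℝ) := by exact_mod_cast h
      have hx2 : (2:ℝ) ≤ (n : ℝ) ^ c := by
        calc (2:ℝ) ≤ (n:ℝ) := hn2
        _ = (n:ℝ) ^ (1:ℝ) := (Real.rpow_one _).symm
        _ ≤ (n:ℝ) ^ c := Real.rpow_le_rpow_of_exponent_le (by linarith) hc1.le
      have hfl : (n : ℝ) ^ c - 1 < (a n : ℝ) := Nat.sub_one_lt_floor _
      linarith
  -- summability transfer to the subtype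
  have hequiv : ∀ t : ℝ,
      Summable (fun x : A => ((x : ℝ) ^ t)⁻¹) ↔
      Summable (fun n : {n : ℕ | 1 ≤ n} => ((a n : ℝ) ^ t)⁻¹) := by
    intro t
    rw [← (Equiv.Set.imageOfInjOn a {n | 1 ≤ n} hinj).summable_iff]
    rfl
  -- the key characterization
  have hkey : ∀ t : ℝ, 0 < t →
      (Summable (fun x : A => ((x : ℝ) ^ t)⁻¹) ↔ s < t) := by
    intro t ht
    rw [hequiv]
    constructor
    · -- divergence for t ≤ s
      intro hsum
      by_contra hts
      push_neg at hts
      have hcomp : Summable (fun n : {n : ℕ | 1 ≤ n} => ((n : ℕ) : ℝ)⁻¹) := by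
        apply hsum.of_nonneg_of_le (fun n => by positivity)
        rintro ⟨n, hn⟩
        simp only
        have hn1 : (1:ℝ) ≤ (n:ℝ) := by exact_mod_cast hn
        have han : (1:ℝ) ≤ ((a n : ℕ) : ℝ) := by exact_mod_cast h1le n hn
        apply inv_anti₀ (by positivity)
        calc ((a n : ℕ) : ℝ) ^ t ≤ ((n : ℝ) ^ c) ^ t := by
              apply Real.rpow_le_rpow (by positivity) (hfle n) ht.le
          _ = (n : ℝ) ^ (c * t) := (Real.rpow_mul n.cast_nonneg c t).symm
          _ ≤ (n : ℝ) ^ (1:ℝ) := by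
              apply Real.rpow_le_rpow_of_exponent_le (by exact_mod_cast hn)
              rw [hc]
              rw [div_mul_eq_mul_div, one_mul, div_le_one hs0]
              exact hts
          _ = (n : ℝ) := Real.rpow_one _
      have hcomp' : Summable ((fun n : ℕ => (n : ℝ)⁻¹) ∘ ((↑) : {n : ℕ | 1 ≤ n} → ℕ)) := hcomp
      rw [summable_subtype_iff_indicator] at hcomp'
      apply Real.not_summable_natCast_inv
      have heq : Set.indicator {n : ℕ | 1 ≤ n} (fun n : ℕ => ((n:ℕ):ℝ)⁻¹) =
          fun n : ℕ => (n : ℝ)⁻¹ := by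
        funext n
        rcases Nat.eq_zero_or_pos n with h | h
        · subst h; simp
        · exact Set.indicator_of_mem (show n ∈ {n : ℕ | 1 ≤ n} from h) _
      rwa [heq] at hcomp'
    · -- convergence for t > s
      intro hst
      have hts1 : 1 < c * t := by
        rw [hc, div_mul_eq_mul_div, one_mul, lt_div_iff₀ hs0, one_mul]
        exact hst
      have hbig : Summable (fun n : ℕ => (2:ℝ) ^ t * ((n : ℝ) ^ (c * t))⁻¹) :=
        (Real.summable_nat_rpow_inv.mpr hts1).mul_left _
      have hsum : Summable (fun n : ℕ => ((a n : ℝ) ^ t)⁻¹) := by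
        apply hbig.of_nonneg_of_le (fun n => by positivity)
        intro n
        rcases Nat.eq_zero_or_pos n with h | h
        · subst h
          have : a 0 = 0 := by
            simp [ha, Real.zero_rpow (by positivity : c ≠ 0)]
          rw [this]
          simp [Real.zero_rpow (ne_of_gt ht), Real.zero_rpow (by positivity : c * t ≠ 0)]
        · have hb : (n : ℝ) ^ (c * t) ≤ 2 ^ t * (a n : ℝ) ^ t := by
            calc (n : ℝ) ^ (c * t) = ((n : ℝ) ^ c) ^ t := by
                  rw [← Real.rpow_mul (by positivity)]
            _ ≤ (2 * (a n : ℝ)) ^ t := Real.rpow_le_rpow (by positivity) (h2le n h) ht.le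
            _ = 2 ^ t * (a n : ℝ) ^ t := Real.mul_rpow (by norm_num) (by positivity)
          have hapos : (0:ℝ) < (a n : ℝ) ^ t := by
            have := h1le n h
            have : (1:ℝ) ≤ (a n : ℝ) := by exact_mod_cast this
            positivity
          have hnpos : (0:ℝ) < (n : ℝ) ^ (c * t) := by
            have : (1:ℝ) ≤ (n:ℝ) := by exact_mod_cast h
            positivity
          rw [inv_eq_one_div, ← div_eq_mul_inv, div_le_div_iff₀ hapos hnpos, one_mul]
          exact hb
      exact hsum.subtype _
  -- now conclude
  have hset : {t : ℝ | 0 < t ∧ Summable (fun x : A => ((x : ℝ) ^ t)⁻¹)} = Set.Ioi s := by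
    ext t
    simp only [Set.mem_setOf_eq, Set.mem_Ioi]
    constructor
    · rintro ⟨ht, hsum⟩
      exact (hkey t ht).mp hsum
    · intro hst
      have ht : 0 < t := lt_trans hs0 hst
      exact ⟨ht, (hkey t ht).mpr hst⟩
  have hconv : convExp A = s := by
    rw [convExp, hset, csInf_Ioi]
  constructor
  · exact hconv
  · intro q hsq hq1
    constructor
    · intro B hB
      simp only [Set.mem_setOf_eq] at hB ⊢
      rw [hB]
      linarith
    · intro hsub
      have hAmem : A ∈ {B : Set ℕ | convExp B < q} := by
        simp only [Set.mem_setOf_eq, hconv]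
        exact hsq
      have := hsub hAmem
      simp only [Set.mem_setOf_eq, hconv] at this
      linarith
end

section
/- For 0 < q < 1, the set A = {a_n : n ∈ ℕ} with a_n = ⌊n^{1/q} (log(n+1))^{2/q}⌋ + 1 satisfies ∑_{n} 1/a_n^q < ∞ and λ(A) = q; hence I_{<q} ⊊ I_c^{(q)}. -/
open Filter Topology


noncomputable def myX (q : ℝ) (n : ℕ) : ℝ :=
  (n : ℝ) ^ (1 / q) * (Real.log ((n : ℝ) + 1)) ^ (2 / q)

noncomputable def myF (q : ℝ) (n : ℕ) : ℕ := ⌊myX q n⌋₊ + 1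

lemma myX_nonneg (q : ℝ) (n : ℕ) : 0 ≤ myX q n :=
  mul_nonneg (Real.rpow_nonneg (Nat.cast_nonneg n) _)
    (Real.rpow_nonneg (Real.log_nonneg (by simp [le_add_iff_nonneg_left])) _)

lemma myX_pos (q : ℝ) {n : ℕ} (hn : 1 ≤ n) : 0 < myX q n := by
  have h1 : (1:ℝ) ≤ (n:ℝ) := by exact_mod_cast hn
  have hlog : 0 < Real.log ((n:ℝ) + 1) := Real.log_pos (by linarith)
  exact mul_pos (Real.rpow_pos_of_pos (by linarith) _) (Real.rpow_pos_of_pos hlog _)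

lemma myX_rpow {q : ℝ} (hq : 0 < q) (n : ℕ) (r : ℝ) :
    myX q n ^ r = (n : ℝ) ^ (r / q) * Real.log ((n : ℝ) + 1) ^ (2 * r / q) := by
  unfold myX
  rw [Real.mul_rpow (Real.rpow_nonneg (Nat.cast_nonneg n) _)
      (Real.rpow_nonneg (Real.log_nonneg (by simp [le_add_iff_nonneg_left])) _),
    ← Real.rpow_mul (Nat.cast_nonneg n), ← Real.rpow_mul (Real.log_nonneg (by simp [le_add_iff_nonneg_left])),
    show 1 / q * r = r / q by ring, show 2 / q * r = 2 * r / q by ring]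

lemma myX_rpow_self {q : ℝ} (hq : 0 < q) (n : ℕ) :
    myX q n ^ q = (n : ℝ) * Real.log ((n : ℝ) + 1) ^ 2 := by
  rw [myX_rpow hq, div_self hq.ne', show 2 * q / q = 2 by field_simp,
    Real.rpow_one, Real.rpow_two]

lemma summable_bertrand :
    Summable (fun n : ℕ => ((n : ℝ) * Real.log ((n : ℝ) + 1) ^ 2)⁻¹) := by
  apply (summable_condensed_iff_of_nonneg (fun n => by positivity) ?mono).mp
  case mono =>
    intro m n hm hmn
    have hm1 : (1:ℝ) ≤ (m:ℝ) := by exact_mod_cast hm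
    have hlm : 0 < Real.log ((m:ℝ) + 1) := Real.log_pos (by linarith)
    have h1 : 0 < (m:ℝ) * Real.log ((m:ℝ) + 1) ^ 2 := by positivity
    have h2 : (m:ℝ) * Real.log ((m:ℝ) + 1) ^ 2 ≤ (n:ℝ) * Real.log ((n:ℝ) + 1) ^ 2 := by
      have hmn' : (m:ℝ) ≤ (n:ℝ) := by exact_mod_cast hmn
      exact mul_le_mul hmn' (pow_le_pow_left₀ hlm.le
        (Real.log_le_log (by linarith) (by linarith)) 2) (by positivity) (by linarith)
    exact inv_anti₀ h1 h2
  -- condensed series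
  apply (summable_nat_add_iff 1).mp
  have hbound : ∀ k : ℕ,
      (2:ℝ) ^ (k+1) * (((2 ^ (k+1) : ℕ) : ℝ) * Real.log (((2 ^ (k+1) : ℕ) : ℝ) + 1) ^ 2)⁻¹
        ≤ (Real.log 2 ^ 2)⁻¹ * ((((k:ℝ) + 1) ^ 2)⁻¹) := by
    intro k
    have hc : ((2 ^ (k+1) : ℕ) : ℝ) = (2:ℝ) ^ (k+1) := by push_cast; ring
    rw [hc, mul_inv, ← mul_assoc, mul_inv_cancel₀ (by positivity), one_mul]
    have hlog2 : (0:ℝ) < Real.log 2 := Real.log_pos (by norm_num)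
    have hkl : ((k:ℝ) + 1) * Real.log 2 ≤ Real.log ((2:ℝ) ^ (k+1) + 1) := by
      have : ((k:ℝ) + 1) * Real.log 2 = Real.log ((2:ℝ) ^ (k+1)) := by
        rw [Real.log_pow]; push_cast; ring
      rw [this]
      apply Real.log_le_log (by positivity) (by linarith)
    have hpos : (0:ℝ) < ((k:ℝ) + 1) * Real.log 2 := by positivity
    calc (Real.log ((2:ℝ) ^ (k+1) + 1) ^ 2)⁻¹
        ≤ ((((k:ℝ) + 1) * Real.log 2) ^ 2)⁻¹ := by
          apply inv_anti₀ (by positivity)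
          exact pow_le_pow_left₀ hpos.le hkl 2
      _ = (Real.log 2 ^ 2)⁻¹ * ((((k:ℝ) + 1) ^ 2)⁻¹) := by
          rw [mul_pow, mul_inv, mul_comm]
  apply Summable.of_nonneg_of_le (fun k => by positivity) hbound
  apply Summable.mul_left
  have : Summable (fun k : ℕ => (((k:ℕ):ℝ) ^ 2)⁻¹) := Real.summable_nat_pow_inv.mpr one_lt_two
  have h2 := (summable_nat_add_iff 1).mpr this
  apply h2.congr
  intro k
  push_cast
  ring

lemma myX_lt_myF (q : ℝ) (n : ℕ) : myX q n < (myF q n : ℝ) := by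
  have := Nat.lt_floor_add_one (myX q n)
  unfold myF
  push_cast
  linarith

lemma summable_myF_q {q : ℝ} (hq0 : 0 < q) :
    Summable (fun n : ℕ => ((myF q (n+1) : ℝ) ^ q)⁻¹) := by
  have hsum := (summable_nat_add_iff 1).mpr summable_bertrand
  apply Summable.of_nonneg_of_le (fun n => by positivity) _ hsum
  intro n
  have hXpos : 0 < myX q (n+1) := myX_pos q (Nat.le_add_left 1 n)
  have hXq : 0 < myX q (n+1) ^ q := Real.rpow_pos_of_pos hXpos q
  have hle : myX q (n+1) ^ q ≤ (myF q (n+1) : ℝ) ^ q :=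
    Real.rpow_le_rpow hXpos.le (myX_lt_myF q (n+1)).le hq0.le
  have h2 : ((myF q (n+1) : ℝ) ^ q)⁻¹ ≤ (myX q (n+1) ^ q)⁻¹ := inv_anti₀ hXq hle
  refine h2.trans_eq ?_
  rw [myX_rpow_self hq0]

lemma rpow_succ_ge {p : ℝ} (hp : 1 ≤ p) {x : ℝ} (hx : 1 ≤ x) :
    x ^ p + 1 ≤ (x + 1) ^ p := by
  have hx0 : (0:ℝ) < x := by linarith
  have hinv : (0:ℝ) ≤ 1/x := by positivity
  have hB : 1 + p * (1/x) ≤ (1 + 1/x) ^ p := one_add_mul_self_le_rpow_one_add (by linarith) hp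
  have heq : (x + 1) ^ p = x ^ p * (1 + 1/x) ^ p := by
    rw [← Real.mul_rpow hx0.le (by linarith)]
    congr 1
    field_simp
  have hxp1 : (1:ℝ) ≤ x ^ (p - 1) := Real.one_le_rpow hx (by linarith)
  have hsplit : x ^ p * (1/x) = x ^ (p-1) := by
    rw [Real.rpow_sub hx0, Real.rpow_one]
    ring
  have hxp0 : 0 < x ^ p := Real.rpow_pos_of_pos hx0 p
  calc x ^ p + 1 ≤ x ^ p + p * x ^ (p-1) := by nlinarith
    _ = x ^ p * (1 + p * (1/x)) := by rw [mul_add, mul_one, ← hsplit]; ring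
    _ ≤ x ^ p * (1 + 1/x) ^ p := by nlinarith [hB, hxp0]
    _ = (x+1)^p := heq.symm

lemma one_le_inv_q {q : ℝ} (hq0 : 0 < q) (hq1 : q < 1) : 1 ≤ 1 / q := by
  rw [le_div_iff₀ hq0]; linarith

lemma log_ge_one {x : ℝ} (hx : 3 ≤ x) : 1 ≤ Real.log x := by
  rw [Real.le_log_iff_exp_le (by linarith)]
  have := Real.exp_one_lt_d9
  linarith

lemma myX_step {q : ℝ} (hq0 : 0 < q) (hq1 : q < 1) {n : ℕ} (hn : 2 ≤ n) :
    myX q n + 1 ≤ myX q (n + 1) := by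
  have hp : 1 ≤ 1 / q := one_le_inv_q hq0 hq1
  have hn2 : (2:ℝ) ≤ (n:ℝ) := by exact_mod_cast hn
  have hlog1 : 1 ≤ Real.log ((n:ℝ) + 1) := log_ge_one (by linarith)
  have hL1 : 1 ≤ Real.log ((n:ℝ) + 1) ^ (2 / q) :=
    Real.one_le_rpow hlog1 (by positivity)
  have hkey : (n:ℝ) ^ (1/q) + 1 ≤ ((n:ℝ) + 1) ^ (1/q) := rpow_succ_ge hp (by linarith)
  have hcast : ((n+1 : ℕ) : ℝ) = (n:ℝ) + 1 := by push_cast; ring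
  have hmono : Real.log ((n:ℝ) + 1) ^ (2/q) ≤ Real.log ((n:ℝ) + 1 + 1) ^ (2/q) :=
    Real.rpow_le_rpow (Real.log_nonneg (by linarith))
      (Real.log_le_log (by linarith) (by linarith)) (by positivity)
  have hXn1 : ((n:ℝ) + 1) ^ (1/q) * Real.log ((n:ℝ) + 1) ^ (2/q) ≤ myX q (n+1) := by
    unfold myX
    rw [hcast]
    exact mul_le_mul_of_nonneg_left hmono (Real.rpow_nonneg (by linarith) _)
  have h1 : myX q n + 1 ≤ ((n:ℝ) + 1) ^ (1/q) * Real.log ((n:ℝ) + 1) ^ (2/q) := by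
    unfold myX
    have hnp : (0:ℝ) ≤ (n:ℝ) ^ (1/q) := Real.rpow_nonneg (by linarith) _
    nlinarith [mul_le_mul_of_nonneg_right hkey (le_trans zero_le_one hL1)]
  linarith

lemma myF_step {q : ℝ} (hq0 : 0 < q) (hq1 : q < 1) {n : ℕ} (hn : 1 ≤ n) :
    myF q n < myF q (n + 1) := by
  rcases eq_or_lt_of_le hn with h1 | h2
  · -- n = 1
    have hX1 : myX q 1 < 1 := by
      unfold myX
      rw [Nat.cast_one, Real.one_rpow, one_mul]
      have h2 : Real.log ((1:ℝ) + 1) < 1 := by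
        norm_num
        have := Real.log_two_lt_d9
        linarith
      exact Real.rpow_lt_one (Real.log_nonneg (by norm_num)) h2 (by positivity)
    have hX2 : (2:ℝ) ≤ myX q 2 := by
      unfold myX
      have hc : ((2:ℕ):ℝ) = (2:ℝ) := by norm_num
      rw [hc]
      have h2p : (2:ℝ) ≤ (2:ℝ) ^ (1/q) := by
        nth_rewrite 1 [← Real.rpow_one 2]
        exact Real.rpow_le_rpow_of_exponent_le one_le_two (one_le_inv_q hq0 hq1)
      have hl : 1 ≤ Real.log ((2:ℝ) + 1) := log_ge_one (by norm_num)
      have hL : 1 ≤ Real.log ((2:ℝ) + 1) ^ (2/q) := Real.one_le_rpow hl (by positivity)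
      nlinarith
    subst h1
    have hF1 : myF q 1 = 1 := by
      unfold myF
      rw [Nat.floor_eq_zero.mpr hX1]
    have hF2 : 3 ≤ myF q (1+1) := by
      unfold myF
      have : 2 ≤ ⌊myX q (1+1)⌋₊ := Nat.le_floor (by norm_num; exact_mod_cast hX2)
      omega
    omega
  · have hstep := myX_step hq0 hq1 h2
    have hfloor : ⌊myX q n⌋₊ + 1 ≤ ⌊myX q (n+1)⌋₊ := by
      rw [← Nat.floor_add_one (myX_nonneg q n)]
      exact Nat.floor_le_floor hstep
    unfold myF
    omega

lemma myF_pos (q : ℝ) (n : ℕ) : (0:ℝ) < (myF q n : ℝ) := by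
  have : 0 < myF q n := Nat.succ_pos _
  exact_mod_cast this

lemma myF_rpow_upper {q t : ℝ} (hq0 : 0 < q) (hq1 : q < 1) (ht0 : 0 < t) (htq : t < q)
    {n : ℕ} (hn : 2 ≤ n) :
    (myF q n : ℝ) ^ t ≤ (2 ^ t * 2 ^ ((1 - t/q)/2) * (((1 - t/q) / (2 * (2*t/q))) ^ (2*t/q))⁻¹)
      * (n:ℝ) ^ ((1 + t/q)/2) := by
  set s := t / q with hs_def
  have hs0 : 0 < s := div_pos ht0 hq0
  have hs1 : s < 1 := (div_lt_one hq0).mpr htq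
  set c := 2 * t / q with hc_def
  have hc0 : 0 < c := by positivity
  set ε := (1 - s) / (2 * c) with he_def
  have hε : 0 < ε := div_pos (by linarith) (by positivity)
  have hn2 : (2:ℝ) ≤ (n:ℝ) := by exact_mod_cast hn
  have hn1 : (1:ℝ) ≤ (n:ℝ) := by linarith
  have hlog1 : 1 ≤ Real.log ((n:ℝ) + 1) := log_ge_one (by linarith)
  have hL0 : 0 ≤ Real.log ((n:ℝ) + 1) := by linarith
  -- 1 ≤ myX q n
  have hX1 : 1 ≤ myX q n := by
    unfold myX
    have h1 : (1:ℝ) ≤ (n:ℝ) ^ (1/q) := Real.one_le_rpow hn1 (by positivity)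
    have h2 : (1:ℝ) ≤ Real.log ((n:ℝ) + 1) ^ (2/q) := Real.one_le_rpow hlog1 (by positivity)
    nlinarith
  -- myF ≤ 2 * myX
  have hF2X : (myF q n : ℝ) ≤ 2 * myX q n := by
    have hfl : (⌊myX q n⌋₊ : ℝ) ≤ myX q n := Nat.floor_le (myX_nonneg q n)
    unfold myF
    push_cast
    linarith
  have hFt : (myF q n : ℝ) ^ t ≤ (2 * myX q n) ^ t :=
    Real.rpow_le_rpow (myF_pos q n).le hF2X ht0.le
  have hmul : (2 * myX q n) ^ t = 2 ^ t * myX q n ^ t :=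
    Real.mul_rpow (by norm_num) (myX_nonneg q n)
  have hXt : myX q n ^ t = (n:ℝ) ^ s * Real.log ((n:ℝ) + 1) ^ c := myX_rpow hq0 n t
  -- bound the log power
  have hlog_le : Real.log ((n:ℝ) + 1) ≤ ((n:ℝ) + 1) ^ ε / ε :=
    Real.log_le_rpow_div (by linarith) hε
  have hLc : Real.log ((n:ℝ) + 1) ^ c ≤ (((n:ℝ) + 1) ^ ε / ε) ^ c :=
    Real.rpow_le_rpow hL0 hlog_le hc0.le
  have hεc : ε * c = (1 - s) / 2 := by
    rw [he_def]
    field_simp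
  have hdiv : (((n:ℝ) + 1) ^ ε / ε) ^ c = ((n:ℝ) + 1) ^ ((1-s)/2) * (ε ^ c)⁻¹ := by
    rw [Real.div_rpow (Real.rpow_nonneg (by linarith) _) hε.le, ← Real.rpow_mul (by linarith),
      hεc, div_eq_mul_inv]
  have hn1le : ((n:ℝ) + 1) ^ ((1-s)/2) ≤ 2 ^ ((1-s)/2) * (n:ℝ) ^ ((1-s)/2) := by
    rw [← Real.mul_rpow (by norm_num) (by linarith)]
    exact Real.rpow_le_rpow (by linarith) (by linarith) (by linarith)
  have hns : (n:ℝ) ^ s * (n:ℝ) ^ ((1-s)/2) = (n:ℝ) ^ ((1+s)/2) := by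
    rw [← Real.rpow_add (by linarith)]
    congr 1
    ring
  have hεcpos : 0 < ε ^ c := Real.rpow_pos_of_pos hε _
  have hnspos : 0 ≤ (n:ℝ) ^ s := Real.rpow_nonneg (by linarith) _
  calc (myF q n : ℝ) ^ t ≤ 2 ^ t * ((n:ℝ) ^ s * Real.log ((n:ℝ) + 1) ^ c) := by
        rw [← hXt, ← hmul]; exact hFt
    _ ≤ 2 ^ t * ((n:ℝ) ^ s * (((n:ℝ) + 1) ^ ((1-s)/2) * (ε ^ c)⁻¹)) := by
        have := hLc.trans_eq hdiv
        have h2t : (0:ℝ) ≤ 2 ^ t := (Real.rpow_pos_of_pos two_pos t).le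
        exact mul_le_mul_of_nonneg_left (mul_le_mul_of_nonneg_left this hnspos) h2t
    _ ≤ 2 ^ t * ((n:ℝ) ^ s * ((2 ^ ((1-s)/2) * (n:ℝ) ^ ((1-s)/2)) * (ε ^ c)⁻¹)) := by
        have h2t : (0:ℝ) ≤ 2 ^ t := (Real.rpow_pos_of_pos two_pos t).le
        exact mul_le_mul_of_nonneg_left (mul_le_mul_of_nonneg_left
          (mul_le_mul_of_nonneg_right hn1le (by positivity)) hnspos) h2t
    _ = (2 ^ t * 2 ^ ((1-s)/2) * (ε ^ c)⁻¹) * (n:ℝ) ^ ((1+s)/2) := by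
        rw [← hns]; ring

lemma not_summable_myF {q t : ℝ} (hq0 : 0 < q) (hq1 : q < 1) (ht0 : 0 < t) (htq : t < q) :
    ¬ Summable (fun n : ℕ => ((myF q (n+1) : ℝ) ^ t)⁻¹) := by
  intro hsum
  set s := t / q with hs_def
  have hs0 : 0 < s := div_pos ht0 hq0
  have hs1 : s < 1 := (div_lt_one hq0).mpr htq
  set c := 2 * t / q with hc_def
  have hc0 : 0 < c := by positivity
  set ε := (1 - s) / (2 * c) with he_def
  have hε : 0 < ε := div_pos (by linarith) (by positivity)
  set K := 2 ^ t * 2 ^ ((1 - s)/2) * (ε ^ c)⁻¹ with hK_def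
  have hK : 0 < K := by
    have h1 : (0:ℝ) < 2 ^ t := Real.rpow_pos_of_pos two_pos t
    have h2 : (0:ℝ) < 2 ^ ((1-s)/2) := Real.rpow_pos_of_pos two_pos _
    have h3 : (0:ℝ) < ε ^ c := Real.rpow_pos_of_pos hε _
    positivity
  set s' := (1 + s)/2 with hs'_def
  have hs'1 : s' < 1 := by rw [hs'_def]; linarith
  -- shifted summable
  have hshift : Summable (fun n : ℕ => ((myF q (n+2) : ℝ) ^ t)⁻¹) := by
    have h := (summable_nat_add_iff 1).mpr hsum
    exact h.congr fun n => by norm_num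
  -- comparison
  have hsmall : Summable (fun n : ℕ => K⁻¹ * (((n:ℝ) + 2) ^ s')⁻¹) := by
    apply Summable.of_nonneg_of_le _ _ hshift
    · intro n
      have : (0:ℝ) ≤ (((n:ℝ) + 2) ^ s')⁻¹ := by positivity
      positivity
    · intro n
      have hkey := myF_rpow_upper hq0 hq1 ht0 htq (n := n+2) (by omega)
      have hcast : ((n+2 : ℕ) : ℝ) = (n:ℝ) + 2 := by push_cast; ring
      rw [hcast] at hkey
      have hFt : 0 < (myF q (n+2) : ℝ) ^ t := Real.rpow_pos_of_pos (myF_pos q _) t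
      rw [← mul_inv]
      exact inv_anti₀ hFt hkey
  have hsum2 : Summable (fun n : ℕ => (((n:ℝ) + 2) ^ s')⁻¹) := by
    have h := hsmall.mul_left K
    apply h.congr
    intro n
    rw [← mul_assoc, mul_inv_cancel₀ hK.ne', one_mul]
  have hsum3 : Summable (fun n : ℕ => (((n:ℕ):ℝ) ^ s')⁻¹) := by
    apply (summable_nat_add_iff 2).mp
    apply hsum2.congr
    intro n
    push_cast
    norm_num
  have := Real.summable_nat_rpow_inv.mp hsum3
  linarith

lemma summable_image_iff {q : ℝ} (hq0 : 0 < q) (hq1 : q < 1) (r : ℝ) :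
    Summable (fun a : (myF q '' {n | 1 ≤ n}) => (((a : ℕ) : ℝ) ^ r)⁻¹) ↔
    Summable (fun n : ℕ => ((myF q (n+1) : ℝ) ^ r)⁻¹) := by
  have hg : StrictMono (fun k : ℕ => myF q (k+1)) :=
    strictMono_nat_of_lt_succ fun k => myF_step hq0 hq1 (Nat.le_add_left 1 k)
  have hset : myF q '' {n | 1 ≤ n} = Set.range (fun k : ℕ => myF q (k+1)) := by
    ext m
    constructor
    · rintro ⟨n, hn, rfl⟩
      exact ⟨n - 1, by show myF q (n - 1 + 1) = myF q n; rw [Nat.sub_add_cancel hn]⟩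
    · rintro ⟨k, rfl⟩
      exact ⟨k + 1, Nat.le_add_left 1 k, rfl⟩
  rw [hset]
  rw [← Equiv.summable_iff (Equiv.ofInjective _ hg.injective)]
  have hcomp : ((fun a : Set.range (fun k : ℕ => myF q (k+1)) => (((a : ℕ) : ℝ) ^ r)⁻¹) ∘
        (Equiv.ofInjective _ hg.injective))
      = fun n : ℕ => ((myF q (n+1) : ℝ) ^ r)⁻¹ := by
    funext k
    simp [Equiv.ofInjective, Equiv.ofLeftInverse, Function.comp]
  rw [hcomp]

lemma myF_succ_eq (q : ℝ) (n : ℕ) :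
    myF q (n+1) = ⌊((n : ℝ) + 1) ^ (1 / q) * (Real.log ((n : ℝ) + 2)) ^ (2 / q)⌋₊ + 1 := by
  unfold myF myX
  congr 2
  push_cast
  ring_nf

/-- For `0 < q < 1`, with `aₙ = ⌊n^{1/q} (log(n+1))^{2/q}⌋ + 1` (n ≥ 1), the set
`A = {aₙ : n ≥ 1}` satisfies `∑ 1/aₙ^q < ∞` and `λ(A) = q`; hence `I_{<q} ⊊ I_c^{(q)}`. -/
theorem Ilt_ssubset_Ic (q : ℝ) (hq0 : 0 < q) (hq1 : q < 1) :
    (Summable (fun n : ℕ =>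
        (((⌊((n : ℝ) + 1) ^ (1 / q) * (Real.log ((n : ℝ) + 2)) ^ (2 / q)⌋₊ + 1 : ℕ) : ℝ) ^ q)⁻¹)) ∧
    convExp ((fun n : ℕ => ⌊(n : ℝ) ^ (1 / q) * (Real.log ((n : ℝ) + 1)) ^ (2 / q)⌋₊ + 1) ''
        {n | 1 ≤ n}) = q ∧
    {B : Set ℕ | convExp B < q} ⊂
      {B : Set ℕ | Summable (fun b : B => ((b : ℝ) ^ q)⁻¹)} := by

  have hFdef : (fun n : ℕ => ⌊(n : ℝ) ^ (1 / q) * (Real.log ((n : ℝ) + 1)) ^ (2 / q)⌋₊ + 1)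
      = myF q := rfl
  have hpart1 : Summable (fun n : ℕ =>
      (((⌊((n : ℝ) + 1) ^ (1 / q) * (Real.log ((n : ℝ) + 2)) ^ (2 / q)⌋₊ + 1 : ℕ) : ℝ) ^ q)⁻¹) := by
    apply (summable_myF_q hq0).congr
    intro n
    rw [myF_succ_eq]
  have hqmem : q ∈ {t : ℝ | 0 < t ∧
      Summable (fun a : (myF q '' {n | 1 ≤ n}) => (((a : ℕ) : ℝ) ^ t)⁻¹)} :=
    ⟨hq0, (summable_image_iff hq0 hq1 q).mpr (summable_myF_q hq0)⟩
  have lb : ∀ t ∈ {t : ℝ | 0 < t ∧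
      Summable (fun a : (myF q '' {n | 1 ≤ n}) => (((a : ℕ) : ℝ) ^ t)⁻¹)}, q ≤ t := by
    rintro t ⟨ht0, hts⟩
    by_contra h
    push_neg at h
    exact not_summable_myF hq0 hq1 ht0 h ((summable_image_iff hq0 hq1 t).mp hts)
  have hconv : convExp (myF q '' {n | 1 ≤ n}) = q :=
    le_antisymm (csInf_le ⟨q, lb⟩ hqmem) (le_csInf ⟨q, hqmem⟩ lb)
  refine ⟨hpart1, by rw [hFdef]; exact hconv, ?_⟩
  rw [Set.ssubset_def]
  constructor
  · intro B hB
    simp only [Set.mem_setOf_eq] at hB ⊢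
    have hne : {t : ℝ | 0 < t ∧ Summable (fun b : B => ((b : ℝ) ^ t)⁻¹)}.Nonempty := by
      refine ⟨2, by norm_num, ?_⟩
      have hs : Summable (fun n : ℕ => ((n : ℝ) ^ (2:ℝ))⁻¹) :=
        Real.summable_nat_rpow_inv.mpr one_lt_two
      exact hs.subtype B
    obtain ⟨t, ⟨ht0, htsum⟩, htq⟩ := exists_lt_of_csInf_lt hne hB
    apply Summable.of_nonneg_of_le (fun b => by positivity) _ htsum
    intro b
    rcases Nat.eq_zero_or_pos (b : ℕ) with h0 | h1
    · simp [h0, Real.zero_rpow hq0.ne', Real.zero_rpow ht0.ne']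
    · have hb1 : (1:ℝ) ≤ ((b : ℕ) : ℝ) := by exact_mod_cast h1
      exact inv_anti₀ (Real.rpow_pos_of_pos (by linarith) t)
        (Real.rpow_le_rpow_of_exponent_le hb1 htq.le)
  · intro hsub
    have hARHS : (myF q '' {n | 1 ≤ n}) ∈
        {B : Set ℕ | Summable (fun b : B => ((b : ℝ) ^ q)⁻¹)} :=
      (summable_image_iff hq0 hq1 q).mpr (summable_myF_q hq0)
    have hALHS := hsub hARHS
    simp only [Set.mem_setOf_eq, hconv] at hALHS
    exact lt_irrefl q hALHS
end

section
/- For every ε > 0, the set A_ε = {n ≥ 2 : h(n)/log n ≥ ε} has convergence exponent λ(A_ε) = 0, where h(n) is the minimum exponent in the prime factorization of n. In other words, the sequence h(n)/log n I_0-converges to 0. -/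
open Filter Topology

/-- `h(n)`: the minimum exponent in the prime factorization of `n` (with `h(1) = 1`). -/
noncomputable def minExp (n : ℕ) : ℕ :=
  if h : n.factorization.support.Nonempty then
    n.factorization.support.inf' h (fun p => n.factorization p)
  else 1

/-- Summability of `n ↦ (n^t)⁻¹` over `N`-smooth numbers, for any `t > 0`. -/
lemma summable_smooth_rpow (N : ℕ) {t : ℝ} (ht : 0 < t) :
    Summable (fun m : N.smoothNumbers => (((m : ℕ) : ℝ) ^ t)⁻¹) := by
  have hf₁ : (((1 : ℕ) : ℝ) ^ t)⁻¹ = 1 := by simp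
  have hmul : ∀ {m n : ℕ}, Nat.Coprime m n →
      (((m * n : ℕ) : ℝ) ^ t)⁻¹ = (((m : ℕ) : ℝ) ^ t)⁻¹ * (((n : ℕ) : ℝ) ^ t)⁻¹ := by
    intro m n _
    push_cast
    rw [Real.mul_rpow (by positivity) (by positivity), mul_inv]
  have hsum : ∀ {p : ℕ}, p.Prime →
      Summable (fun n : ℕ => ‖(((p ^ n : ℕ) : ℝ) ^ t)⁻¹‖) := by
    intro p hp
    have hp1 : (1 : ℝ) < (p : ℝ) := by exact_mod_cast hp.one_lt
    have hr : (1 : ℝ) < (p : ℝ) ^ t :=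
      (Real.one_lt_rpow_iff_of_pos (by linarith)).mpr (Or.inl ⟨hp1, ht⟩)
    have key : ∀ n : ℕ, ‖(((p ^ n : ℕ) : ℝ) ^ t)⁻¹‖ = (((p : ℝ) ^ t)⁻¹) ^ n := by
      intro n
      rw [Real.norm_eq_abs, abs_of_nonneg (by positivity)]
      push_cast
      rw [← Real.rpow_natCast (p : ℝ) n, ← Real.rpow_mul (by positivity),
        mul_comm (n : ℝ) t, Real.rpow_mul (by positivity), Real.rpow_natCast, inv_pow]
    simp only [key]
    exact summable_geometric_of_lt_one (by positivity) (inv_lt_one_of_one_lt₀ hr)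
  have := (EulerProduct.summable_and_hasSum_smoothNumbers_prod_primesBelow_tsum
    (f := fun n : ℕ => (((n : ℕ) : ℝ) ^ t)⁻¹) hf₁ hmul hsum N).1
  exact this.of_norm

/-- For every `ε > 0`, `λ({n ≥ 2 : h(n)/log n ≥ ε}) = 0`, i.e. `h(n)/log n`
`I₀`-converges to `0`. -/
theorem minExp_I0_convergence (ε : ℝ) (hε : 0 < ε) :
    convExp {n : ℕ | 2 ≤ n ∧ ε ≤ (minExp n : ℝ) / Real.log n} = 0 := by
  set A : Set ℕ := {n : ℕ | 2 ≤ n ∧ ε ≤ (minExp n : ℝ) / Real.log n} with hA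
  set N : ℕ := ⌈Real.exp (1 / ε)⌉₊ + 1 with hN
  -- every element of A is N-smooth
  have hsmooth : A ⊆ N.smoothNumbers := by
    intro n hn
    obtain ⟨hn2, hεn⟩ := hn
    have hn0 : n ≠ 0 := by omega
    have hlogn : 0 < Real.log n := Real.log_pos (by exact_mod_cast hn2)
    have hk : ε * Real.log n ≤ (minExp n : ℝ) := by
      rw [le_div_iff₀ hlogn] at hεn
      linarith
    have hkpos : 0 < minExp n := by
      by_contra h
      push_neg at h
      interval_cases (minExp n)
      simp only [Nat.cast_zero] at hk
      nlinarith
    rw [Nat.mem_smoothNumbers']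
    intro p hp hpn
    have hpsupp : p ∈ n.factorization.support := by
      rw [Nat.support_factorization, Nat.mem_primeFactors]
      exact ⟨hp, hpn, hn0⟩
    have hle : minExp n ≤ n.factorization p := by
      rw [minExp, dif_pos ⟨p, hpsupp⟩]
      exact Finset.inf'_le _ hpsupp
    have hdvd : p ^ minExp n ∣ n :=
      dvd_trans (pow_dvd_pow p hle) (Nat.ordProj_dvd n p)
    have hple : (p : ℝ) ^ (minExp n : ℕ) ≤ (n : ℝ) := by
      exact_mod_cast Nat.le_of_dvd (by omega) hdvd
    have hp1 : (1 : ℝ) < (p : ℝ) := by exact_mod_cast hp.one_lt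
    have hlogle : (minExp n : ℝ) * Real.log p ≤ Real.log n := by
      rw [← Real.log_pow]
      exact Real.log_le_log (by positivity) hple
    have hlogp : Real.log p ≤ 1 / ε := by
      have hkR : (0 : ℝ) < (minExp n : ℝ) := by exact_mod_cast hkpos
      rw [le_div_iff₀ hε]
      calc Real.log p * ε ≤ (Real.log n / (minExp n : ℝ)) * ε := by
            apply mul_le_mul_of_nonneg_right _ hε.le
            rw [le_div_iff₀ hkR]
            linarith [hlogle]
        _ ≤ (Real.log n / (ε * Real.log n)) * ε := by
            apply mul_le_mul_of_nonneg_right _ hε.le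
            apply div_le_div_of_nonneg_left hlogn.le (by positivity) hk
        _ = 1 := by field_simp
    have hpexp : (p : ℝ) ≤ Real.exp (1 / ε) :=
      (Real.log_le_iff_le_exp (by linarith)).mp hlogp
    have : p ≤ ⌈Real.exp (1 / ε)⌉₊ := by
      exact_mod_cast hpexp.trans (Nat.le_ceil _)
    omega
  -- the defining set of convExp is exactly Ioi 0
  have hset : {t : ℝ | 0 < t ∧ Summable (fun a : A => ((a : ℝ) ^ t)⁻¹)} = Set.Ioi 0 := by
    ext t
    simp only [Set.mem_setOf_eq, Set.mem_Ioi, and_iff_left_iff_imp]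
    intro ht
    have hS := (summable_subtype_iff_indicator (s := N.smoothNumbers)
      (f := fun n : ℕ => ((n : ℝ) ^ t)⁻¹)).mp (summable_smooth_rpow N ht)
    refine (summable_subtype_iff_indicator (s := A)
      (f := fun n : ℕ => ((n : ℝ) ^ t)⁻¹)).mpr ?_
    refine Summable.of_nonneg_of_le (fun n => ?_) (fun n => ?_) hS
    · exact Set.indicator_nonneg (fun n _ => by positivity) n
    · by_cases hn : n ∈ A
      · rw [Set.indicator_of_mem hn, Set.indicator_of_mem (hsmooth hn)]
      · rw [Set.indicator_of_notMem hn]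
        exact Set.indicator_nonneg (fun n _ => by positivity) n
  rw [convExp, hset, csInf_Ioi]
end
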